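/- Let D = {2^β·m : β, m ∈ ℤ, β ≥ −1000, 2^{52} ≤ m < 2^{53}} ⊂ ℝ and L = {2^β·m : β, m ∈ ℤ, β ≥ −1000, 2^{63} ≤ m < 2^{64}} ⊂ ℝ. Let 2 ≤ n ≤ 10^9 and x_i = −cos(iπ/n) for i = 0,…,n. Suppose y_i ∈ L for n/2 < i < n satisfy |x_i − y_i| ≤ 0.53·2^{−52}·min(|x_i|, |y_i|), and set y_n = 1. Define x̂_n = 1; for n/2 < i < n, if y_i and y_{i+1} have the same binary exponent, let x̂_i be the element of D with even mantissa closest to y_i, and otherwise let x̂_i be the element of D with mantissa divisible by four closest to y_i; set x̂_{n/2} = 0 when n is even; and set x̂_i = −x̂_{n−i} for 0 ≤ i < n/2. Then |x̂_i − x_i| ≤ 2.54·2^{−52}·|x_i| for all i, and each of the numbers 2 + x̂_1, 2 − x̂_{n−1}, and x̂_i + x̂_{i+1} for i = 0,…,n−1 belongs to D ∪ (−D) ∪ {0}. -/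

import Mathlib

/-!
For `n/2 < i ≤ n` the long double `y_i` lies in the binade `[2^(e_i+63), 2^(e_i+64))`, so a closest
double with mantissa divisible by `d ∈ {2, 4}` is `x̂_i = 2^(e_i+11) m_i` with `2^52 ≤ m_i ≤ 2^53`,
`d ∣ m_i` and `|x̂_i - y_i| ≤ 2^(e_i+10) d ≤ 2^-51 y_i`; with the relative error `0.53·2^-52` of
`y_i` this gives the bound `2.54·2^-52`. Since `x_i ≤ x_{i+1} ≤ 3 x_i`, the exponents of `y_i` and
`y_{i+1}` differ by `Δ ∈ {-1, 0, 1, 2}`, and `x̂_i + x̂_{i+1}` is a power of two times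
`m_i + 2^Δ m_{i+1}` (times `2 m_i + m_{i+1}` if `Δ = -1`). This integer has at most 53 significant
bits: even mantissas suffice for `Δ = 0`, mantissas divisible by four, used exactly where the
exponent changes, for `Δ = 1`, and for `Δ = -1` and `Δ = 2` the closeness of `y_i` and `y_{i+1}`
forces `m_i` to the end of its binade whenever one more bit would be needed. The same count handles
`2 - x̂_{n-1}`, and the lower half follows from `x̂_{n-i} = -x̂_i`.
-/

/-- Idealized floating point numbers with `e+1`-bit mantissa divisible by `d`:
`{2^β·m : β, m ∈ ℤ, β ≥ -1000, 2^e ≤ m < 2^{e+1}, d ∣ m}`.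
`idealFloats 52 1` is the set `D` of doubles, `idealFloats 63 1` the set `L` of
long doubles, and `idealFloats 52 2` (resp. `idealFloats 52 4`) the doubles
with even mantissa (resp. with mantissa divisible by four). -/
def idealFloats (e : ℕ) (d : ℤ) : Set ℝ :=
  {x | ∃ β m : ℤ, -1000 ≤ β ∧ 2 ^ e ≤ m ∧ m < 2 ^ (e + 1) ∧ d ∣ m ∧
        x = (2 : ℝ) ^ β * (m : ℝ)}

open Real

theorem two_zpow_add_natCast (E : ℤ) (k : ℕ) : (2 : ℝ) ^ (E + k) = 2 ^ E * 2 ^ k := by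
  rw [zpow_add₀ two_ne_zero, zpow_natCast]

theorem eq_of_two_zpow_le_of_lt_two_zpow {a b : ℤ} {s : ℝ} (ha : 2 ^ a ≤ s) (ha' : s < 2 ^ (a + 1))
    (hb : 2 ^ b ≤ s) (hb' : s < 2 ^ (b + 1)) : a = b := by
  have h₁ := (zpow_lt_zpow_iff_right₀ one_lt_two).1 (ha.trans_lt hb')
  have h₂ := (zpow_lt_zpow_iff_right₀ one_lt_two).1 (hb.trans_lt ha')
  omega

theorem two_zpow_mul_mem_Ico {p : ℕ} {β m : ℤ} (hm : 2 ^ p ≤ m) (hm' : m < 2 ^ (p + 1)) :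
    (2 : ℝ) ^ β * m ∈ Set.Ico (2 ^ (β + p)) (2 ^ (β + p + 1)) := by
  rw [add_assoc, ← Nat.cast_succ, two_zpow_add_natCast, two_zpow_add_natCast]
  have h2 : (0 : ℝ) < 2 ^ β := by positivity
  exact ⟨by gcongr; exact_mod_cast hm, by gcongr; exact_mod_cast hm'⟩

theorem two_zpow_mul_mem_idealFloats {p : ℕ} {d β m : ℤ} (hβ : -1000 ≤ β) (hm : 2 ^ p ≤ m)
    (hm' : m ≤ 2 ^ (p + 1)) (hdm : d ∣ m) (hdp : d ∣ 2 ^ p) :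
    (2 : ℝ) ^ β * m ∈ idealFloats p d := by
  rcases hm'.lt_or_eq with hlt | rfl
  · exact ⟨β, m, hβ, hm, hlt, hdm, rfl⟩
  · refine ⟨β + 1, 2 ^ p, by omega, le_rfl, pow_lt_pow_right₀ one_lt_two p.lt_succ_self, hdp, ?_⟩
    push_cast
    rw [zpow_add_one₀ two_ne_zero, pow_succ]
    ring

theorem two_zpow_mul_mem_idealFloats_one {p k : ℕ} {E N : ℤ} (hE : -1000 ≤ E) (hN : 2 ^ p ≤ N)
    (hN' : N ≤ 2 ^ (p + 1 + k)) (hdvd : 2 ^ k ∣ N) : (2 : ℝ) ^ E * N ∈ idealFloats p 1 := by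
  induction k with
  | zero => exact two_zpow_mul_mem_idealFloats hE hN hN' (one_dvd N) (one_dvd _)
  | succ k ih =>
    by_cases hle : N ≤ 2 ^ (p + 1 + k)
    · exact ih hle ((pow_dvd_pow 2 k.le_succ).trans hdvd)
    obtain ⟨M, rfl⟩ := hdvd
    have h2k : (0 : ℤ) < 2 ^ (k + 1) := by positivity
    have hM : 2 ^ p ≤ M := by
      refine (lt_of_mul_lt_mul_left ?_ h2k.le).le
      rw [← pow_add, show k + 1 + p = p + 1 + k by ring]; exact not_le.1 hle
    have hM' : M ≤ 2 ^ (p + 1) := by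
      refine le_of_mul_le_mul_left ?_ h2k
      rw [← pow_add, show k + 1 + (p + 1) = p + 1 + (k + 1) by ring]; exact hN'
    have h := two_zpow_mul_mem_idealFloats (β := E + (k + 1 : ℕ)) (by omega) hM hM' (one_dvd M)
      (one_dvd _)
    rwa [two_zpow_add_natCast, mul_assoc, ← Int.cast_two, ← Int.cast_pow, ← Int.cast_mul] at h

theorem exists_mantissa_of_mem_idealFloats {p : ℕ} {d E : ℤ} {z : ℝ} (hz : z ∈ idealFloats p d)
    (hdp : d ∣ 2 ^ p) (hlo : 2 ^ (E + p) ≤ z) (hhi : z ≤ 2 ^ (E + p + 1)) :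
    ∃ m : ℤ, z = 2 ^ E * m ∧ 2 ^ p ≤ m ∧ m ≤ 2 ^ (p + 1) ∧ d ∣ m := by
  rcases hhi.lt_or_eq with hlt | rfl
  · obtain ⟨β, m, -, hm, hm', hdm, rfl⟩ := hz
    obtain ⟨hβ, hβ'⟩ := two_zpow_mul_mem_Ico (β := β) hm hm'
    have : β + p = E + p := eq_of_two_zpow_le_of_lt_two_zpow hβ hβ' hlo hlt
    exact ⟨m, by rw [show β = E by omega], hm, hm'.le, hdm⟩
  · refine ⟨2 ^ (p + 1), ?_, by gcongr <;> omega, le_rfl, hdp.mul_right 2⟩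
    rw [add_assoc, ← Nat.cast_succ, two_zpow_add_natCast]
    push_cast; rfl

theorem exists_dvd_two_mul_abs_sub_le {s a b μ : ℤ} (hs : 0 < s) (ha : s ∣ a) (hb : s ∣ b)
    (haμ : a ≤ μ) (hμb : μ ≤ b) : ∃ r, s ∣ r ∧ a ≤ r ∧ r ≤ b ∧ 2 * |r - μ| ≤ s := by
  obtain ⟨a, rfl⟩ := ha
  obtain ⟨b, rfl⟩ := hb
  have hμ := Int.mul_ediv_add_emod μ s
  have ht := Int.emod_nonneg μ hs.ne'
  have ht' := Int.emod_lt_of_pos μ hs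
  have haq : s * a ≤ s * (μ / s) :=
    mul_le_mul_of_nonneg_left (Int.le_ediv_of_mul_le hs (by linarith)) hs.le
  by_cases hround : 2 * (μ % s) ≤ s
  · refine ⟨s * (μ / s), dvd_mul_right _ _, haq, by linarith, ?_⟩
    rw [show s * (μ / s) - μ = -(μ % s) by linarith, abs_neg, abs_of_nonneg ht]
    exact hround
  · have hqb : μ / s + 1 ≤ b := lt_of_mul_lt_mul_left (by linarith) hs.le
    refine ⟨s * (μ / s + 1), dvd_mul_right _ _, by linarith,
      mul_le_mul_of_nonneg_left hqb hs.le, ?_⟩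
    rw [show s * (μ / s + 1) - μ = s - μ % s by linarith, abs_of_nonneg (by linarith)]
    linarith

def IsClosestIn (S : Set ℝ) (y z : ℝ) : Prop :=
  z ∈ S ∧ ∀ w ∈ S, |z - y| ≤ |w - y|

theorem IsClosestIn.mem_Icc {S : Set ℝ} {y z a b : ℝ} (hz : IsClosestIn S y z) (ha : a ∈ S)
    (hb : b ∈ S) (hay : a ≤ y) (hyb : y ≤ b) : z ∈ Set.Icc a b := by
  have h₁ := hz.2 a ha
  have h₂ := hz.2 b hb
  rw [abs_of_nonpos (sub_nonpos.2 hay)] at h₁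
  rw [abs_of_nonneg (sub_nonneg.2 hyb)] at h₂
  constructor <;> linarith [le_abs_self (z - y), neg_abs_le (z - y)]

def IsBinadeRounding (p : ℕ) (E d : ℤ) (y z : ℝ) : Prop :=
  2 ^ (E + p) ≤ y ∧ y < 2 ^ (E + p + 1) ∧
    ∃ m : ℤ, z = 2 ^ E * m ∧ 2 ^ p ≤ m ∧ m ≤ 2 ^ (p + 1) ∧ d ∣ m ∧ 2 * |z - y| ≤ 2 ^ E * d

theorem exists_mem_idealFloats_two_mul_abs_sub_le {p k : ℕ} {d e₀ μ : ℤ} (hd : 0 < d)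
    (hdp : d ∣ 2 ^ p) (he : -1000 ≤ e₀ + k) (hμ : 2 ^ (p + k) ≤ μ) (hμ' : μ < 2 ^ (p + k + 1)) :
    ∃ w ∈ idealFloats p d, 2 * |w - 2 ^ e₀ * μ| ≤ 2 ^ (e₀ + k) * d := by
  have hsa : 2 ^ k * d ∣ (2 : ℤ) ^ (p + k) := by
    rw [pow_add, mul_comm (2 ^ p)]; exact mul_dvd_mul_left _ hdp
  have hsb : 2 ^ k * d ∣ (2 : ℤ) ^ (p + k + 1) := by
    rw [show (2 : ℤ) ^ (p + k + 1) = 2 ^ k * 2 ^ (p + 1) by ring]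
    exact mul_dvd_mul_left _ (hdp.mul_right 2)
  obtain ⟨r, ⟨m, rfl⟩, hr, hr', hrμ⟩ :=
    exists_dvd_two_mul_abs_sub_le (by positivity) hsa hsb hμ hμ'.le
  have h2k : (0 : ℤ) < 2 ^ k := by positivity
  have hm : 2 ^ p ≤ d * m :=
    le_of_mul_le_mul_left (by rw [← mul_assoc, ← pow_add, add_comm]; exact hr) h2k
  have hm' : d * m ≤ 2 ^ (p + 1) := by
    refine le_of_mul_le_mul_left ?_ h2k
    rw [← mul_assoc, ← pow_add, show k + (p + 1) = p + k + 1 by ring]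
    exact hr'
  refine ⟨_, two_zpow_mul_mem_idealFloats he hm hm' (dvd_mul_right d m) hdp, ?_⟩
  calc 2 * |2 ^ (e₀ + k) * ((d * m : ℤ) : ℝ) - 2 ^ e₀ * μ|
        = 2 ^ e₀ * ((2 * |2 ^ k * d * m - μ| : ℤ) : ℝ) := by
          rw [two_zpow_add_natCast, mul_assoc, ← mul_sub, abs_mul,
            abs_of_pos (by positivity : (0 : ℝ) < 2 ^ e₀)]
          push_cast [mul_assoc]; ring
    _ ≤ 2 ^ e₀ * ((2 ^ k * d : ℤ) : ℝ) := by gcongr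
    _ = 2 ^ (e₀ + k) * d := by rw [two_zpow_add_natCast]; push_cast; ring

theorem IsClosestIn.isBinadeRounding {p k : ℕ} {d e₀ μ : ℤ} {z : ℝ} (hd : 0 < d)
    (hdp : d ∣ 2 ^ p) (he : -1000 ≤ e₀ + k) (hμ : 2 ^ (p + k) ≤ μ) (hμ' : μ < 2 ^ (p + k + 1))
    (hz : IsClosestIn (idealFloats p d) (2 ^ e₀ * μ) z) :
    IsBinadeRounding p (e₀ + k) d (2 ^ e₀ * μ) z := by
  have hy := two_zpow_mul_mem_Ico (β := e₀) hμ hμ'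
  rw [show e₀ + ((p + k : ℕ) : ℤ) = e₀ + k + p by push_cast; ring] at hy
  have hpow : ∀ j : ℕ, (2 : ℝ) ^ (e₀ + k) * ((2 ^ j : ℤ) : ℝ) = 2 ^ (e₀ + k + j) := fun j ↦ by
    rw [two_zpow_add_natCast (e₀ + k) j]; push_cast; rfl
  have hle : (2 : ℤ) ^ p ≤ 2 ^ (p + 1) := pow_le_pow_right₀ one_le_two (by omega)
  have hlo := two_zpow_mul_mem_idealFloats he le_rfl hle hdp hdp
  have hhi := two_zpow_mul_mem_idealFloats he hle le_rfl (hdp.mul_right 2) hdp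
  rw [hpow] at hlo hhi
  push_cast [← add_assoc] at hhi
  obtain ⟨hzlo, hzhi⟩ := hz.mem_Icc hlo hhi hy.1 hy.2.le
  obtain ⟨w, hw, hwy⟩ := exists_mem_idealFloats_two_mul_abs_sub_le hd hdp he hμ hμ'
  obtain ⟨m, rfl, hm, hm', hdm⟩ := exists_mantissa_of_mem_idealFloats hz.1 hdp hzlo hzhi
  exact ⟨hy.1, hy.2, m, rfl, hm, hm', hdm,
    (mul_le_mul_of_nonneg_left (hz.2 w hw) two_pos.le).trans hwy⟩

theorem IsBinadeRounding.mem_idealFloats_one {p : ℕ} {E d : ℤ} {y z : ℝ}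
    (hz : IsBinadeRounding p E d y z) (hE : -1000 ≤ E) : z ∈ idealFloats p 1 := by
  obtain ⟨-, -, m, rfl, hm, hm', -⟩ := hz
  exact two_zpow_mul_mem_idealFloats hE hm hm' (one_dvd m) (one_dvd _)

theorem IsBinadeRounding.abs_sub_le {p : ℕ} {E d : ℤ} {y z : ℝ}
    (hz : IsBinadeRounding p E d y z) (hd : d ≤ 4) : |z - y| ≤ 2 ^ (1 - (p : ℤ)) * y := by
  obtain ⟨hy, -, m, -, -, -, -, herr⟩ := hz
  have hE : (2 : ℝ) ^ E * d ≤ 2 ^ E * 4 := by gcongr; exact_mod_cast hd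
  calc |z - y| ≤ 2 ^ (1 - (p : ℤ)) * 2 ^ (E + p) := by
        rw [← zpow_add₀ two_ne_zero, show 1 - (p : ℤ) + (E + p) = E + 1 by ring,
          zpow_add_one₀ two_ne_zero]
        linarith
    _ ≤ 2 ^ (1 - (p : ℤ)) * y := by gcongr

theorem two_zpow_mul_add_two_zpow_mul (E : ℤ) (j : ℕ) (p q : ℤ) :
    (2 : ℝ) ^ E * p + 2 ^ (E + j) * q = 2 ^ E * ((p + 2 ^ j * q : ℤ) : ℝ) := by
  rw [two_zpow_add_natCast]; push_cast; ring

theorem mantissa_lt_of_exp_pred {E p : ℤ} {y y' : ℝ} (herr : 2 * |2 ^ E * p - y| ≤ 2 ^ E * 4)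
    (hyy' : y ≤ (1 + 3 / 2 ^ 53) * y') (hy' : y' < 2 ^ (E + 52)) : p < 2 ^ 52 + 4 := by
  have h2E : (0 : ℝ) < 2 ^ E := by positivity
  have hzy := le_abs_self (2 ^ E * (p : ℝ) - y)
  rw [zpow_add₀ two_ne_zero] at hy'
  norm_num at hy'
  have : (2 : ℝ) ^ E * p < 2 ^ E * (2 ^ 52 + 4) := by nlinarith
  exact_mod_cast lt_of_mul_lt_mul_left this h2E.le

theorem four_mul_mantissa_lt_of_exp_add_two {E p q d' : ℤ} {y y' : ℝ}
    (herr : 2 * |2 ^ E * p - y| ≤ 2 ^ E * 4) (herr' : 2 * |2 ^ (E + 2) * q - y'| ≤ 2 ^ (E + 2) * d')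
    (hy'y : y' ≤ 3 * ((1 + 3 / 2 ^ 53) * y)) (hp : 0 ≤ p) (hp' : p ≤ 2 ^ 53) :
    4 * q < 3 * p + 16 + 2 * d' := by
  have h2E : (0 : ℝ) < 2 ^ E := by positivity
  have hzy := neg_abs_le (2 ^ E * (p : ℝ) - y)
  rw [zpow_add₀ two_ne_zero] at herr'
  norm_num at herr'
  have hzy' := le_abs_self (2 ^ E * 4 * (q : ℝ) - y')
  have hpR : (0 : ℝ) ≤ p := by exact_mod_cast hp
  have hpR' : (p : ℝ) ≤ 2 ^ 53 := by exact_mod_cast hp'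
  have : (2 : ℝ) ^ E * (4 * q) < 2 ^ E * (3 * p + 16 + 2 * d') := by nlinarith
  exact_mod_cast lt_of_mul_lt_mul_left this h2E.le

theorem le_add_one_and_le_add_two_of_le_mul {a b : ℤ} {y y' : ℝ} (hy : 2 ^ a ≤ y)
    (hy' : y < 2 ^ (a + 1)) (hy₁ : 2 ^ b ≤ y') (hy₁' : y' < 2 ^ (b + 1))
    (hyy' : y ≤ (1 + 3 / 2 ^ 53) * y') (hy'y : y' ≤ 3 * ((1 + 3 / 2 ^ 53) * y)) :
    a ≤ b + 1 ∧ b ≤ a + 2 := by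
  have hpos : (0 : ℝ) < 2 ^ a := by positivity
  have hpos' : (0 : ℝ) < 2 ^ b := by positivity
  have h₁ : a < b + 2 := by
    refine (zpow_lt_zpow_iff_right₀ one_lt_two).1 (hy.trans_lt ?_)
    rw [zpow_add₀ two_ne_zero] at hy₁' ⊢
    norm_num at hy₁' ⊢
    nlinarith
  have h₂ : b < a + 3 := by
    refine (zpow_lt_zpow_iff_right₀ one_lt_two).1 (hy₁.trans_lt ?_)
    rw [zpow_add₀ two_ne_zero] at hy' ⊢
    norm_num at hy' ⊢
    nlinarith
  omega

theorem IsBinadeRounding.add_mem_idealFloats_one {E F d d' : ℤ} {y y' z z' : ℝ}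
    (hz : IsBinadeRounding 52 E d y z) (hz' : IsBinadeRounding 52 F d' y' z')
    (hd : d = 2 ∨ d = 4) (hd' : d' = 2 ∨ d' = 4) (hdF : E ≠ F → d = 4)
    (hE : -1000 ≤ E) (hF : -1000 ≤ F)
    (hyy' : y ≤ (1 + 3 / 2 ^ 53) * y') (hy'y : y' ≤ 3 * ((1 + 3 / 2 ^ 53) * y)) :
    z + z' ∈ idealFloats 52 1 := by
  obtain ⟨hy, hy', p, rfl, hp, hp', hdp, herr⟩ := hz
  obtain ⟨hy₁, hy₁', q, rfl, hq, hq', hdq, herr'⟩ := hz'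
  push_cast at hy hy' hy₁ hy₁'
  have h2p : 2 ∣ p := by rcases hd with rfl | rfl <;> omega
  have h2q : 2 ∣ q := by rcases hd' with rfl | rfl <;> omega
  have hEF := le_add_one_and_le_add_two_of_le_mul hy hy' hy₁ hy₁' hyy' hy'y
  obtain rfl | rfl | rfl | rfl : E = F + 1 ∨ F = E ∨ F = E + 1 ∨ F = E + 2 := by omega
  · obtain rfl := hdF (by omega)
    push_cast at herr
    have := mantissa_lt_of_exp_pred herr hyy' (by rwa [show F + 1 + 52 = F + 52 + 1 by ring])
    rw [add_comm, show F + 1 = F + (1 : ℕ) by rfl, two_zpow_mul_add_two_zpow_mul]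
    exact two_zpow_mul_mem_idealFloats_one (k := 1) hF (by omega) (by omega) (by omega)
  · rw [← mul_add, ← Int.cast_add]
    exact two_zpow_mul_mem_idealFloats_one (k := 1) hE (by omega) (by omega) (by omega)
  · rw [show E + 1 = E + (1 : ℕ) by rfl, two_zpow_mul_add_two_zpow_mul]
    obtain rfl := hdF (by omega)
    exact two_zpow_mul_mem_idealFloats_one (k := 2) hE (by omega) (by omega) (by omega)
  · obtain rfl := hdF (by omega)
    push_cast at herr
    have := four_mul_mantissa_lt_of_exp_add_two herr herr' hy'y (by omega) (by omega)
    rw [show E + 2 = E + (2 : ℕ) by rfl, two_zpow_mul_add_two_zpow_mul]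
    by_cases hN : p + 2 ^ 2 * q ≤ 2 ^ 55
    · exact two_zpow_mul_mem_idealFloats_one (k := 2) hE (by omega) (by omega) (by omega)
    -- a sum in `[2^55, 2^56)` forces `p = 2^53`, since `4 * q < 3 * p + 16 + 2 * d'` and `d' ∣ q`
    · exact two_zpow_mul_mem_idealFloats_one (k := 3) hE (by omega) (by omega)
        (by rcases hd' with rfl | rfl <;> omega)

theorem two_sub_two_zpow_mul {E : ℤ} (j : ℕ) (hE : E + j = 1) (p : ℤ) :
    2 - (2 : ℝ) ^ E * p = 2 ^ E * ((2 ^ j - p : ℤ) : ℝ) := by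
  rw [Int.cast_sub, mul_sub]
  push_cast
  rw [← zpow_natCast, ← zpow_add₀ two_ne_zero, hE, zpow_one]

theorem IsBinadeRounding.two_sub_mem_idealFloats_one {E d : ℤ} {y z : ℝ}
    (hz : IsBinadeRounding 52 E d y z) (hd : d = 2 ∨ d = 4) (hdE : E ≠ -52 → d = 4)
    (hy : 1 / 4 ≤ y) (hy' : y < 1 + 2 ^ (-52 : ℤ)) : 2 - z ∈ idealFloats 52 1 := by
  obtain ⟨hylo, hyhi, p, rfl, hp, hp', hdp, herr⟩ := hz
  push_cast at hylo hyhi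
  have hE : E + 52 < 1 := by
    refine (zpow_lt_zpow_iff_right₀ one_lt_two).1 (hylo.trans_lt (hy'.trans_le ?_))
    norm_num
  have hE' : -2 < E + 52 + 1 := by
    refine (zpow_lt_zpow_iff_right₀ one_lt_two).1 ((le_of_eq ?_).trans_lt (hy.trans_lt hyhi))
    norm_num
  obtain rfl | rfl | rfl : E = -52 ∨ E = -53 ∨ E = -54 := by omega
  · have hpd : 2 * p < 2 ^ 53 + 2 + d := by
      have := le_abs_self ((2 : ℝ) ^ (-52 : ℤ) * p - y)
      norm_num at herr this hy'
      exact_mod_cast (by linarith : (2 * p : ℝ) < 2 ^ 53 + 2 + d)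
    rw [two_sub_two_zpow_mul 53 (by norm_num)]
    exact two_zpow_mul_mem_idealFloats_one (k := 0) (by norm_num)
      (by rcases hd with rfl | rfl <;> omega) (by omega) (one_dvd _)
  · obtain rfl := hdE (by norm_num)
    rw [two_sub_two_zpow_mul 54 (by norm_num)]
    exact two_zpow_mul_mem_idealFloats_one (k := 1) (by norm_num) (by omega) (by omega) (by omega)
  · obtain rfl := hdE (by norm_num)
    rw [two_sub_two_zpow_mul 55 (by norm_num)]
    exact two_zpow_mul_mem_idealFloats_one (k := 2) (by norm_num) (by omega) (by omega) (by omega)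

theorem sin_le_three_mul_sin {a b : ℝ} (ha : 0 ≤ a) (hab : a ≤ b) (hb : b ≤ 3 * a)
    (hb' : b ≤ π / 2) : sin b ≤ 3 * sin a := by
  rcases le_or_gt (3 * a) (π / 2) with h3 | h3
  · have hsa := sin_nonneg_of_nonneg_of_le_pi ha (by linarith [pi_pos])
    calc sin b ≤ sin (3 * a) := sin_le_sin_of_le_of_le_pi_div_two (by linarith [pi_pos]) h3 hb
      _ = 3 * sin a - 4 * sin a ^ 3 := sin_three_mul a
      _ ≤ 3 * sin a := by nlinarith [pow_nonneg hsa 3]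
  · have : 1 / 2 ≤ sin a := by
      rw [← sin_pi_div_six]
      exact sin_le_sin_of_le_of_le_pi_div_two (by linarith [pi_pos]) (by linarith) (by linarith)
    linarith [sin_le_one b]

noncomputable def chebyshevNode (n i : ℕ) : ℝ := -cos (i * π / n)

theorem chebyshevNode_eq_sin {n : ℕ} (hn : n ≠ 0) (i : ℕ) :
    chebyshevNode n i = sin ((2 * i - n) * (π / (2 * n))) := by
  rw [chebyshevNode, ← sin_sub_pi_div_two]
  congr 1
  field_simp

theorem chebyshevNode_le_one (n i : ℕ) : chebyshevNode n i ≤ 1 := by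
  rw [chebyshevNode, neg_le]; exact neg_one_le_cos _

theorem chebyshevNode_self {n : ℕ} (hn : n ≠ 0) : chebyshevNode n n = 1 := by
  rw [chebyshevNode, mul_div_cancel_left₀ _ (Nat.cast_ne_zero.2 hn), cos_pi, neg_neg]

theorem chebyshevNode_two_mul_self {i : ℕ} (hi : i ≠ 0) : chebyshevNode (2 * i) i = 0 := by
  rw [chebyshevNode, show (i : ℝ) * π / (2 * i : ℕ) = π / 2 by push_cast; field_simp,
    cos_pi_div_two, neg_zero]

theorem chebyshevNode_sub {n i : ℕ} (hn : n ≠ 0) (hi : i ≤ n) :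
    chebyshevNode n (n - i) = -chebyshevNode n i := by
  rw [chebyshevNode, chebyshevNode, Nat.cast_sub hi,
    show ((n : ℝ) - i) * π / n = π - i * π / n by field_simp, cos_pi_sub]

theorem chebyshevNode_le_succ {n i : ℕ} (hi : i < n) :
    chebyshevNode n i ≤ chebyshevNode n (i + 1) := by
  have hn : (0 : ℝ) < n := by exact_mod_cast (by omega : 0 < n)
  have hi' : (i + 1 : ℝ) ≤ n := by exact_mod_cast hi
  rw [chebyshevNode, chebyshevNode, neg_le_neg_iff]
  push_cast
  refine cos_le_cos_of_nonneg_of_le_pi (by positivity) ?_ (by gcongr; linarith)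
  rw [div_le_iff₀ hn]; nlinarith [pi_pos]

theorem chebyshevNode_pos {n i : ℕ} (h : n < 2 * i) (hi : i ≤ n) : 0 < chebyshevNode n i := by
  have hn : (0 : ℝ) < n := by exact_mod_cast (by omega : 0 < n)
  have h' : (n : ℝ) < 2 * i := by exact_mod_cast h
  have hi' : (i : ℝ) ≤ n := by exact_mod_cast hi
  rw [chebyshevNode_eq_sin (by omega)]
  refine sin_pos_of_pos_of_lt_pi (mul_pos (by linarith) (by positivity)) ?_
  calc (2 * i - n) * (π / (2 * n)) ≤ n * (π / (2 * n)) := by gcongr; linarith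
    _ < π := by field_simp; linarith [pi_pos]

theorem chebyshevNode_succ_le_three_mul {n i : ℕ} (h : n < 2 * i) (hi : i < n) :
    chebyshevNode n (i + 1) ≤ 3 * chebyshevNode n i := by
  have hn : (0 : ℝ) < n := by exact_mod_cast (by omega : 0 < n)
  have h' : (n : ℝ) + 1 ≤ 2 * i := by exact_mod_cast h
  have hi' : (i : ℝ) + 1 ≤ n := by exact_mod_cast hi
  have hθ : 0 < π / (2 * n) := by positivity
  rw [chebyshevNode_eq_sin (by omega), chebyshevNode_eq_sin (by omega)]
  push_cast
  refine sin_le_three_mul_sin (by nlinarith) (by nlinarith) (by nlinarith) ?_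
  calc (2 * (i + 1) - n) * (π / (2 * n)) ≤ n * (π / (2 * n)) := by gcongr; linarith
    _ = π / 2 := by field_simp

theorem one_half_le_chebyshevNode_pred {n : ℕ} (hn : 3 ≤ n) : 1 / 2 ≤ chebyshevNode n (n - 1) := by
  have hn' : (3 : ℝ) ≤ n := by exact_mod_cast hn
  rw [chebyshevNode_sub (by omega) (by omega), chebyshevNode, neg_neg, Nat.cast_one, one_mul,
    ← cos_pi_div_three]
  refine cos_le_cos_of_nonneg_of_le_pi (by positivity) (by linarith [pi_pos]) ?_
  gcongr

theorem le_one_add_mul_of_abs_sub_le_mul_min {c x y : ℝ} (hc : 0 ≤ c) (hc' : c < 1)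
    (hx : 0 < x) (h : |x - y| ≤ c * min |x| |y|) : y ≤ (1 + c) * x ∧ x ≤ (1 + c) * y := by
  have hx' : |x - y| ≤ c * x :=
    h.trans (mul_le_mul_of_nonneg_left ((min_le_left _ _).trans (abs_of_pos hx).le) hc)
  have hy : 0 < y := by linarith [le_abs_self (x - y), mul_lt_of_lt_one_left hx hc']
  have hy' : |x - y| ≤ c * y :=
    h.trans (mul_le_mul_of_nonneg_left ((min_le_right _ _).trans (abs_of_pos hy).le) hc)
  exact ⟨by linarith [neg_abs_le (x - y)], by linarith [le_abs_self (x - y)]⟩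

theorem neg_mem_union_neg_union_zero {α : Type*} [AddGroup α] {S : Set α} {a : α}
    (ha : a ∈ S ∪ -S ∪ {0}) :
    -a ∈ S ∪ -S ∪ {0} := by
  rcases ha with (ha | ha) | rfl
  · exact Or.inl (Or.inr (by rwa [Set.mem_neg, neg_neg]))
  · exact Or.inl (Or.inl ha)
  · exact Or.inr neg_zero

structure ChebyshevRounding (n : ℕ) (x y xh : ℕ → ℝ) (e μ : ℕ → ℤ) : Prop where
  two_le : 2 ≤ n
  x_eq : ∀ i ≤ n, x i = chebyshevNode n i
  y_repr : ∀ i, n < 2 * i → i ≤ n →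
    -1000 ≤ e i ∧ 2 ^ 63 ≤ μ i ∧ μ i < 2 ^ 64 ∧ y i = (2 : ℝ) ^ (e i) * (μ i : ℝ)
  y_err : ∀ i, n < 2 * i → i < n →
    |x i - y i| ≤ 0.53 * (2 : ℝ) ^ (-52 : ℤ) * min |x i| |y i|
  y_last : y n = 1
  xh_last : xh n = 1
  xh_closest : ∀ i, n < 2 * i → i < n →
    (e i = e (i + 1) → IsClosestIn (idealFloats 52 2) (y i) (xh i)) ∧
    (e i ≠ e (i + 1) → IsClosestIn (idealFloats 52 4) (y i) (xh i))
  xh_mid : ∀ l, n = 2 * l → xh l = 0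
  xh_neg : ∀ i, 2 * i < n → xh i = -xh (n - i)

namespace ChebyshevRounding

variable {n : ℕ} {x y xh : ℕ → ℝ} {e μ : ℕ → ℤ}

theorem exp_last (h : ChebyshevRounding n x y xh e μ) : e n = -63 := by
  obtain ⟨-, hμ, hμ', hy⟩ := h.y_repr n (by linarith [h.two_le]) le_rfl
  have hb := two_zpow_mul_mem_Ico (p := 63) (β := e n) hμ hμ'
  rw [← hy, h.y_last] at hb
  have := eq_of_two_zpow_le_of_lt_two_zpow hb.1 hb.2 (b := 0) (by norm_num) (by norm_num)
  push_cast at this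
  omega

theorem x_pos (h : ChebyshevRounding n x y xh e μ) {j : ℕ} (hj : n < 2 * j) (hjn : j ≤ n) :
    0 < x j :=
  h.x_eq j hjn ▸ chebyshevNode_pos hj hjn

theorem y_le_and_x_le (h : ChebyshevRounding n x y xh e μ) {j : ℕ} (hj : n < 2 * j)
    (hjn : j ≤ n) :
    y j ≤ (1 + 0.53 * 2 ^ (-52 : ℤ)) * x j ∧ x j ≤ (1 + 0.53 * 2 ^ (-52 : ℤ)) * y j := by
  rcases hjn.lt_or_eq with hjn | rfl
  · exact le_one_add_mul_of_abs_sub_le_mul_min (by positivity) (by norm_num)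
      (h.x_pos hj hjn.le) (h.y_err j hj hjn)
  · rw [h.x_eq j le_rfl, chebyshevNode_self (by omega), h.y_last]
    norm_num

theorem isBinadeRounding (h : ChebyshevRounding n x y xh e μ) {j : ℕ} (hj : n < 2 * j)
    (hjn : j ≤ n) : ∃ d : ℤ, (d = 2 ∨ d = 4) ∧ (e j ≠ e (j + 1) → d = 4) ∧
      IsBinadeRounding 52 (e j + 11) d (y j) (xh j) := by
  obtain ⟨he, hμ, hμ', hy⟩ := h.y_repr j hj hjn
  rcases hjn.lt_or_eq with hjn | rfl
  · have hround := h.xh_closest j hj hjn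
    rw [hy] at hround ⊢
    by_cases hee : e j = e (j + 1)
    · exact ⟨2, Or.inl rfl, fun hne ↦ absurd hee hne, (hround.1 hee).isBinadeRounding (p := 52)
        (k := 11) (by norm_num) (by norm_num) (by omega) hμ hμ'⟩
    · exact ⟨4, Or.inr rfl, fun _ ↦ rfl, (hround.2 hee).isBinadeRounding (p := 52)
        (k := 11) (by norm_num) (by norm_num) (by omega) hμ hμ'⟩
  · refine ⟨4, Or.inr rfl, fun _ ↦ rfl, ?_⟩
    rw [h.exp_last, h.y_last, h.xh_last]
    refine ⟨by norm_num, by norm_num, 2 ^ 52, by norm_num, le_rfl, by norm_num, by norm_num, ?_⟩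
    norm_num

theorem exp_ge (h : ChebyshevRounding n x y xh e μ) {j : ℕ} (hj : n < 2 * j) (hjn : j ≤ n) :
    -1000 ≤ e j :=
  (h.y_repr j hj hjn).1

theorem x_sub (h : ChebyshevRounding n x y xh e μ) {i : ℕ} (hi : i ≤ n) : x (n - i) = -x i := by
  rw [h.x_eq i hi, h.x_eq (n - i) (Nat.sub_le n i), chebyshevNode_sub (by linarith [h.two_le]) hi]

theorem xh_sub (h : ChebyshevRounding n x y xh e μ) {i : ℕ} (hi : i ≤ n) :
    xh (n - i) = -xh i := by
  rcases lt_trichotomy (2 * i) n with hlt | heq | hgt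
  · rw [h.xh_neg i hlt, neg_neg]
  · rw [show n - i = i by omega, h.xh_mid i heq.symm, neg_zero]
  · rw [h.xh_neg (n - i) (by omega), Nat.sub_sub_self hi]

theorem abs_xh_sub_x_le_of_lt (h : ChebyshevRounding n x y xh e μ) {j : ℕ} (hj : n < 2 * j)
    (hjn : j ≤ n) : |xh j - x j| ≤ 2.54 * (2 : ℝ) ^ (-52 : ℤ) * |x j| := by
  obtain ⟨d, hd, -, hround⟩ := h.isBinadeRounding hj hjn
  have hzy := hround.abs_sub_le (by omega)
  obtain ⟨hyx, hxy⟩ := h.y_le_and_x_le hj hjn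
  have hx := h.x_pos hj hjn
  have hxy' : |y j - x j| ≤ 0.53 * 2 ^ (-52 : ℤ) * x j := by
    rw [abs_le]; constructor <;> linarith
  rw [abs_of_pos hx]
  calc |xh j - x j| ≤ |xh j - y j| + |y j - x j| := abs_sub_le _ _ _
    _ ≤ 2 ^ (-51 : ℤ) * ((1 + 0.53 * 2 ^ (-52 : ℤ)) * x j) + 0.53 * 2 ^ (-52 : ℤ) * x j := by
      push_cast at hzy; gcongr; exact hzy.trans (by gcongr)
    _ ≤ 2.54 * 2 ^ (-52 : ℤ) * x j := by
      rw [← sub_nonneg]; ring_nf; norm_num; positivity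

theorem abs_xh_sub_x_le (h : ChebyshevRounding n x y xh e μ) {i : ℕ} (hi : i ≤ n) :
    |xh i - x i| ≤ 2.54 * (2 : ℝ) ^ (-52 : ℤ) * |x i| := by
  rcases lt_trichotomy (2 * i) n with hlt | heq | hgt
  · have := h.abs_xh_sub_x_le_of_lt (j := n - i) (by omega) (Nat.sub_le n i)
    rwa [h.xh_sub hi, h.x_sub hi, ← neg_sub', abs_neg, abs_neg] at this
  · have hi0 : i ≠ 0 := by linarith [h.two_le]
    rw [h.xh_mid i heq.symm, h.x_eq i hi, ← heq, chebyshevNode_two_mul_self hi0]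
    simp
  · exact h.abs_xh_sub_x_le_of_lt hgt hi

theorem xh_mem_of_lt (h : ChebyshevRounding n x y xh e μ) {j : ℕ} (hj : n < 2 * j)
    (hjn : j ≤ n) : xh j ∈ idealFloats 52 1 := by
  obtain ⟨d, -, -, hround⟩ := h.isBinadeRounding hj hjn
  exact hround.mem_idealFloats_one (by linarith [h.exp_ge hj hjn])

theorem y_le_and_y_succ_le (h : ChebyshevRounding n x y xh e μ) {i : ℕ} (hi : n < 2 * i)
    (hin : i < n) :
    y i ≤ (1 + 3 / 2 ^ 53) * y (i + 1) ∧ y (i + 1) ≤ 3 * ((1 + 3 / 2 ^ 53) * y i) := by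
  obtain ⟨hyx, hxy⟩ := h.y_le_and_x_le hi hin.le
  obtain ⟨hyx', hxy'⟩ := h.y_le_and_x_le (j := i + 1) (by omega) hin
  set c : ℝ := 0.53 * 2 ^ (-52 : ℤ)
  have hc : (1 + c) * (1 + c) ≤ 1 + 3 / 2 ^ 53 := by norm_num [c]
  have hc0 : 0 ≤ c := by positivity
  have hx := h.x_pos hi hin.le
  have hy : 0 < y i := pos_of_mul_pos_right (hx.trans_le hxy) (by positivity)
  have hy' : 0 < y (i + 1) :=
    pos_of_mul_pos_right ((h.x_pos (j := i + 1) (by omega) hin).trans_le hxy') (by positivity)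
  have hmono : x i ≤ x (i + 1) := by
    rw [h.x_eq i hin.le, h.x_eq (i + 1) hin]; exact chebyshevNode_le_succ hin
  have hthree : x (i + 1) ≤ 3 * x i := by
    rw [h.x_eq i hin.le, h.x_eq (i + 1) hin]; exact chebyshevNode_succ_le_three_mul hi hin
  constructor
  · calc y i ≤ (1 + c) * x (i + 1) := hyx.trans (by gcongr)
      _ ≤ (1 + c) * (1 + c) * y (i + 1) := by rw [mul_assoc]; gcongr
      _ ≤ (1 + 3 / 2 ^ 53) * y (i + 1) := by gcongr
  · calc y (i + 1) ≤ (1 + c) * (3 * x i) := hyx'.trans (by gcongr)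
      _ ≤ (1 + c) * (3 * ((1 + c) * y i)) := by gcongr
      _ = 3 * ((1 + c) * (1 + c) * y i) := by ring
      _ ≤ 3 * ((1 + 3 / 2 ^ 53) * y i) := by gcongr

theorem add_succ_mem_of_lt (h : ChebyshevRounding n x y xh e μ) {i : ℕ} (hi : n < 2 * i)
    (hin : i < n) : xh i + xh (i + 1) ∈ idealFloats 52 1 := by
  obtain ⟨d, hd, hdF, hround⟩ := h.isBinadeRounding hi hin.le
  obtain ⟨d', hd', -, hround'⟩ := h.isBinadeRounding (j := i + 1) (by omega) hin
  obtain ⟨hyy', hy'y⟩ := h.y_le_and_y_succ_le hi hin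
  exact hround.add_mem_idealFloats_one hround' hd hd' (fun hne ↦ hdF (by omega))
    (by linarith [h.exp_ge hi hin.le]) (by linarith [h.exp_ge (j := i + 1) (by omega) hin])
    hyy' hy'y

theorem add_succ_mem_of_le (h : ChebyshevRounding n x y xh e μ) {i : ℕ} (hi : n ≤ 2 * i + 1)
    (hin : i < n) : xh i + xh (i + 1) ∈ idealFloats 52 1 ∪ -idealFloats 52 1 ∪ {0} := by
  rcases lt_trichotomy n (2 * i) with hlt | heq | hgt
  · exact Or.inl (Or.inl (h.add_succ_mem_of_lt hlt hin))
  · rw [h.xh_mid i heq, zero_add]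
    exact Or.inl (Or.inl (h.xh_mem_of_lt (by omega) hin))
  · have : xh i = -xh (i + 1) := by rw [← h.xh_sub hin, show n - (i + 1) = i by omega]
    rw [this, neg_add_cancel]
    exact Or.inr rfl

theorem add_succ_mem (h : ChebyshevRounding n x y xh e μ) {i : ℕ} (hin : i < n) :
    xh i + xh (i + 1) ∈ idealFloats 52 1 ∪ -idealFloats 52 1 ∪ {0} := by
  by_cases hi : n ≤ 2 * i + 1
  · exact h.add_succ_mem_of_le hi hin
  · have := neg_mem_union_neg_union_zero (h.add_succ_mem_of_le (i := n - (i + 1)) (by omega)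
      (by omega))
    rwa [show n - (i + 1) + 1 = n - i by omega, h.xh_sub hin, h.xh_sub hin.le, neg_add,
      neg_neg, neg_neg, add_comm] at this

theorem two_sub_mem (h : ChebyshevRounding n x y xh e μ) :
    2 - xh (n - 1) ∈ idealFloats 52 1 ∪ -idealFloats 52 1 ∪ {0} := by
  refine Or.inl (Or.inl ?_)
  rcases h.two_le.eq_or_lt with rfl | hn
  · rw [h.xh_mid 1 rfl, sub_zero]
    exact ⟨-51, 2 ^ 52, by norm_num, le_rfl, by norm_num, one_dvd _, by norm_num⟩
  obtain ⟨d, hd, hdE, hround⟩ := h.isBinadeRounding (j := n - 1) (by omega) (by omega)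
  obtain ⟨hyx, hxy⟩ := h.y_le_and_x_le (j := n - 1) (by omega) (by omega)
  have hx : 1 / 2 ≤ x (n - 1) := h.x_eq (n - 1) (by omega) ▸ one_half_le_chebyshevNode_pred hn
  have hx' : x (n - 1) ≤ 1 := h.x_eq (n - 1) (by omega) ▸ chebyshevNode_le_one n (n - 1)
  refine hround.two_sub_mem_idealFloats_one hd (fun hE ↦ hdE ?_) ?_ ?_
  · rw [show n - 1 + 1 = n by omega, h.exp_last]; omega
  · norm_num at hxy ⊢; linarith
  · norm_num at hyx ⊢; linarith

theorem two_add_mem (h : ChebyshevRounding n x y xh e μ) :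
    2 + xh 1 ∈ idealFloats 52 1 ∪ -idealFloats 52 1 ∪ {0} := by
  have := h.xh_sub (i := n - 1) (by omega)
  rw [Nat.sub_sub_self (by linarith [h.two_le])] at this
  rw [this, ← sub_eq_add_neg]
  exact h.two_sub_mem

end ChebyshevRounding

theorem rounded_chebyshev_nodes_general
    (n : ℕ) (hn : 2 ≤ n)
    (x y xh : ℕ → ℝ) (e μ : ℕ → ℤ)
    (hx : ∀ i ≤ n, x i = -Real.cos (i * Real.pi / n))
    (hyL : ∀ i, n < 2 * i → i < n →
      -1000 ≤ e i ∧ 2 ^ 63 ≤ μ i ∧ μ i < 2 ^ 64 ∧ y i = (2 : ℝ) ^ (e i) * (μ i : ℝ))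
    (hyerr : ∀ i, n < 2 * i → i < n →
      |x i - y i| ≤ 0.53 * (2 : ℝ) ^ (-52 : ℤ) * min |x i| |y i|)
    (hyn : y n = 1)
    (hynL : -1000 ≤ e n ∧ 2 ^ 63 ≤ μ n ∧ μ n < 2 ^ 64 ∧
      y n = (2 : ℝ) ^ (e n) * (μ n : ℝ))
    (hxhn : xh n = 1)
    (hround : ∀ i, n < 2 * i → i < n →
      (e i = e (i + 1) →
        xh i ∈ idealFloats 52 2 ∧ ∀ d ∈ idealFloats 52 2, |xh i - y i| ≤ |d - y i|) ∧
      (e i ≠ e (i + 1) →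
        xh i ∈ idealFloats 52 4 ∧ ∀ d ∈ idealFloats 52 4, |xh i - y i| ≤ |d - y i|))
    (hmid : ∀ l, n = 2 * l → xh l = 0)
    (hneg : ∀ i, 2 * i < n → xh i = -xh (n - i)) :
    (∀ i ≤ n, |xh i - x i| ≤ 2.54 * (2 : ℝ) ^ (-52 : ℤ) * |x i|)
    ∧ 2 + xh 1 ∈ idealFloats 52 1 ∪ -idealFloats 52 1 ∪ {0}
    ∧ 2 - xh (n - 1) ∈ idealFloats 52 1 ∪ -idealFloats 52 1 ∪ {0}
    ∧ ∀ i < n, xh i + xh (i + 1) ∈ idealFloats 52 1 ∪ -idealFloats 52 1 ∪ {0} := by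
  have h : ChebyshevRounding n x y xh e μ :=
    { two_le := hn
      x_eq := hx
      y_repr := fun i hi hin ↦ hin.lt_or_eq.elim (hyL i hi) fun hin ↦ by subst hin; exact hynL
      y_err := hyerr
      y_last := hyn
      xh_last := hxhn
      xh_closest := hround
      xh_mid := hmid
      xh_neg := hneg }
  exact ⟨fun i ↦ h.abs_xh_sub_x_le, h.two_add_mem, h.two_sub_mem, fun i ↦ h.add_succ_mem⟩

/-- Correctness of the rounding procedure for the Chebyshev points of the
second kind: the rounded nodes `x̂_i` are within `2.54·2^{-52}·|x_i|` of the
exact nodes, and `2 + x̂_1`, `2 - x̂_{n-1}` and all sums `x̂_i + x̂_{i+1}` are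
(up to sign, or zero) idealized double precision numbers. -/
theorem rounded_chebyshev_nodes
    (n : ℕ) (hn : 2 ≤ n) (hn9 : n ≤ 10 ^ 9)
    (x y xh : ℕ → ℝ) (e μ : ℕ → ℤ)
    (hx : ∀ i ≤ n, x i = -Real.cos (i * Real.pi / n))
    (hyL : ∀ i, n < 2 * i → i < n →
      -1000 ≤ e i ∧ 2 ^ 63 ≤ μ i ∧ μ i < 2 ^ 64 ∧ y i = (2 : ℝ) ^ (e i) * (μ i : ℝ))
    (hyerr : ∀ i, n < 2 * i → i < n →
      |x i - y i| ≤ 0.53 * (2 : ℝ) ^ (-52 : ℤ) * min |x i| |y i|)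
    (hyn : y n = 1)
    (hynL : -1000 ≤ e n ∧ 2 ^ 63 ≤ μ n ∧ μ n < 2 ^ 64 ∧
      y n = (2 : ℝ) ^ (e n) * (μ n : ℝ))
    (hxhn : xh n = 1)
    (hround : ∀ i, n < 2 * i → i < n →
      (e i = e (i + 1) →
        xh i ∈ idealFloats 52 2 ∧ ∀ d ∈ idealFloats 52 2, |xh i - y i| ≤ |d - y i|) ∧
      (e i ≠ e (i + 1) →
        xh i ∈ idealFloats 52 4 ∧ ∀ d ∈ idealFloats 52 4, |xh i - y i| ≤ |d - y i|))
    (hmid : ∀ l, n = 2 * l → xh l = 0)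
    (hneg : ∀ i, 2 * i < n → xh i = -xh (n - i)) :
    (∀ i ≤ n, |xh i - x i| ≤ 2.54 * (2 : ℝ) ^ (-52 : ℤ) * |x i|)
    ∧ 2 + xh 1 ∈ idealFloats 52 1 ∪ -idealFloats 52 1 ∪ {0}
    ∧ 2 - xh (n - 1) ∈ idealFloats 52 1 ∪ -idealFloats 52 1 ∪ {0}
    ∧ ∀ i < n, xh i + xh (i + 1) ∈ idealFloats 52 1 ∪ -idealFloats 52 1 ∪ {0} :=
  rounded_chebyshev_nodes_general n hn x y xh e μ hx hyL hyerr hyn hynL hxhn hround hmid hneg
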